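/- arXiv:1601.06738 — 4 statements merged into one kernel-verified Lean document; each statement's English description precedes it below -/
import Mathlib

section
/- Let a : ℕ → ℝ be defined by a(0) = m₀ ∈ (0,1) and a(n+1) = a(n) - a(n)*ln(a(n)). Then a(n) tends to 1 as n → ∞. -/
lemma dilation_maps_Ioo {m : ℝ} (hm : m ∈ Set.Ioo (0:ℝ) 1) :
    m - m * Real.log m ∈ Set.Ioo (0:ℝ) 1 := by
  obtain ⟨h0, h1⟩ := hm
  have hlog : Real.log m < 0 := Real.log_neg h0 h1
  constructor
  · nlinarith
  · -- log m > 1 - 1/m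
    have h := Real.log_lt_sub_one_of_pos (x := m⁻¹) (by positivity)
      (by simp; intro h; rw [h] at h1; linarith)
    rw [Real.log_inv] at h
    have : 1 - m⁻¹ < Real.log m := by linarith
    have hm' : m * m⁻¹ = 1 := mul_inv_cancel₀ (ne_of_gt h0)
    nlinarith

theorem dilation_orbit_tendsto_one (m₀ : ℝ) (hm : m₀ ∈ Set.Ioo (0:ℝ) 1)
    (a : ℕ → ℝ) (h0 : a 0 = m₀)
    (hrec : ∀ n, a (n + 1) = a n - a n * Real.log (a n)) :
    Filter.Tendsto a Filter.atTop (nhds 1) := by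
  have hIoo : ∀ n, a n ∈ Set.Ioo (0:ℝ) 1 := by
    intro n
    induction n with
    | zero => rw [h0]; exact hm
    | succ k ih => rw [hrec]; exact dilation_maps_Ioo ih
  have hmono : Monotone a := by
    apply monotone_nat_of_le_succ
    intro n
    rw [hrec]
    have h := hIoo n
    have hlog : Real.log (a n) < 0 := Real.log_neg h.1 h.2
    nlinarith [h.1]
  have hbdd : BddAbove (Set.range a) := ⟨1, by rintro x ⟨n, rfl⟩; exact (hIoo n).2.le⟩
  have htend : Filter.Tendsto a Filter.atTop (nhds (⨆ n, a n)) :=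
    tendsto_atTop_ciSup hmono hbdd
  set L := ⨆ n, a n with hL
  have hLpos : 0 < L := lt_of_lt_of_le (hIoo 0).1 (le_ciSup hbdd 0)
  have hL1 : L ≤ 1 := ciSup_le fun n => (hIoo n).2.le
  -- limit of shifted sequence
  have ht1 : Filter.Tendsto (fun n => a (n + 1)) Filter.atTop (nhds L) :=
    htend.comp (Filter.tendsto_add_atTop_nat 1)
  have ht2 : Filter.Tendsto (fun n => a n - a n * Real.log (a n)) Filter.atTop
      (nhds (L - L * Real.log L)) := by
    exact htend.sub (htend.mul ((Real.continuousAt_log hLpos.ne').tendsto.comp htend))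
  have heq : L = L - L * Real.log L := by
    apply tendsto_nhds_unique ht1
    simpa only [hrec] using ht2
  have : L * Real.log L = 0 := by linarith
  have hlogL : Real.log L = 0 := by
    rcases mul_eq_zero.mp this with h | h
    · exact absurd h hLpos.ne'
    · exact h
  have : L = 1 := by
    rcases lt_or_eq_of_le hL1 with h | h
    · exact absurd (Real.log_neg hLpos h) (by rw [hlogL]; exact lt_irrefl 0)
    · exact h
  rwa [this] at htend
end

section
/- Let b : ℕ → ℝ be defined by b(0) = m₀ ∈ (0,1) and b(n+1) = b(n) + (1-b(n))*ln(1-b(n)). Then b is strictly decreasing and b(n) ∈ (0,1) for all n. -/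
lemma conc_step (x : ℝ) (hx : x ∈ Set.Ioo (0:ℝ) 1) :
    x + (1 - x) * Real.log (1 - x) ∈ Set.Ioo (0:ℝ) 1 ∧
    x + (1 - x) * Real.log (1 - x) < x := by
  obtain ⟨hx0, hx1⟩ := hx
  set u : ℝ := 1 - x with hu
  have hu0 : 0 < u := by simp [hu]; linarith
  have hu1 : u < 1 := by simp [hu]; linarith
  have hlogneg : Real.log u < 0 := Real.log_neg hu0 hu1
  -- log u > 1 - 1/u
  have h1 : Real.log (1/u) < 1/u - 1 :=
    Real.log_lt_sub_one_of_pos (by positivity) (by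
      intro h; rw [div_eq_one_iff_eq (ne_of_gt hu0)] at h; linarith)
  rw [Real.log_div one_ne_zero (ne_of_gt hu0), Real.log_one] at h1
  have h2 : 1 - 1/u < Real.log u := by linarith
  have h3 : u * (1 - 1/u) < u * Real.log u := by
    exact mul_lt_mul_of_pos_left h2 hu0
  have h4 : u * (1 - 1/u) = u - 1 := by field_simp
  constructor
  · constructor
    · nlinarith
    · nlinarith
  · nlinarith

theorem concentration_orbit_strictAnti (m₀ : ℝ) (hm : m₀ ∈ Set.Ioo (0:ℝ) 1)
    (b : ℕ → ℝ) (h0 : b 0 = m₀)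
    (hrec : ∀ n, b (n + 1) = b n + (1 - b n) * Real.log (1 - b n)) :
    StrictAnti b ∧ ∀ n, b n ∈ Set.Ioo (0:ℝ) 1 := by
  have hmem : ∀ n, b n ∈ Set.Ioo (0:ℝ) 1 := by
    intro n
    induction n with
    | zero => rw [h0]; exact hm
    | succ k ih => rw [hrec k]; exact (conc_step _ ih).1
  refine ⟨strictAnti_nat_of_succ_lt fun n => ?_, hmem⟩
  rw [hrec n]; exact (conc_step _ (hmem n)).2
end

section
/- Let b : ℕ → ℝ be defined by b(0) = m₀ ∈ (0,1) and b(n+1) = b(n) + (1-b(n))*ln(1-b(n)). Then b(n) tends to 0 as n → ∞. -/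
/-!
Writing `t = 1 - x`, the hedge is `v x = x + t log t`. Since `t log t ≤ 0` for `t ∈ [0, 1]`
and `t log t ≥ t - 1`, the map `v` sends `[0, 1)` into itself and does not increase its
argument, strictly so on `(0, 1)`. The orbit is therefore a decreasing sequence in `[0, 1)`;
its limit is a fixed point of the continuous map `v` in `[0, 1)`, and the only such point is `0`.
-/

open Real Filter Topology Set Function

noncomputable def concentrationHedge (x : ℝ) : ℝ := x + (1 - x) * log (1 - x)

lemma continuous_concentrationHedge : Continuous concentrationHedge :=
  continuous_id.add (continuous_mul_log.comp (continuous_const.sub continuous_id))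

lemma concentrationHedge_nonneg {x : ℝ} (hx : x ≤ 1) : 0 ≤ concentrationHedge x := by
  have := self_sub_one_le_mul_log (sub_nonneg.mpr hx)
  unfold concentrationHedge
  linarith

lemma concentrationHedge_le_self {x : ℝ} (h0 : 0 ≤ x) (h1 : x ≤ 1) :
    concentrationHedge x ≤ x := by
  have := mul_log_nonpos (sub_nonneg.mpr h1) (by linarith : 1 - x ≤ 1)
  unfold concentrationHedge
  linarith

lemma concentrationHedge_lt_self {x : ℝ} (h0 : 0 < x) (h1 : x < 1) :
    concentrationHedge x < x := by
  have := mul_log_neg (sub_pos.mpr h1) (by linarith : 1 - x < 1)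
  unfold concentrationHedge
  linarith

lemma mapsTo_concentrationHedge_Ico : MapsTo concentrationHedge (Ico 0 1) (Ico 0 1) :=
  fun _ ⟨h0, h1⟩ ↦ ⟨concentrationHedge_nonneg h1.le,
    (concentrationHedge_le_self h0 h1.le).trans_lt h1⟩

lemma eq_zero_of_isFixedPt_concentrationHedge {x : ℝ} (hx : x ∈ Ico 0 1)
    (hfix : IsFixedPt concentrationHedge x) : x = 0 := by
  refine (hx.1.eq_or_lt.resolve_right fun hpos ↦ ?_).symm
  exact (concentrationHedge_lt_self hpos hx.2).ne hfix

lemma antitone_iterate_concentrationHedge {x : ℝ} (hx : x ∈ Ico 0 1) :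
    Antitone fun n ↦ concentrationHedge^[n] x := by
  refine antitone_nat_of_succ_le fun n ↦ ?_
  have hn := mapsTo_concentrationHedge_Ico.iterate n hx
  rw [iterate_succ_apply']
  exact concentrationHedge_le_self hn.1 hn.2.le

lemma tendsto_iterate_concentrationHedge {x : ℝ} (hx : x ∈ Ico 0 1) :
    Tendsto (fun n ↦ concentrationHedge^[n] x) atTop (𝓝 0) := by
  set L := ⨅ n, concentrationHedge^[n] x
  have hmem : ∀ n, concentrationHedge^[n] x ∈ Ico 0 1 :=
    fun n ↦ mapsTo_concentrationHedge_Ico.iterate n hx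
  have hbdd : BddBelow (range fun n ↦ concentrationHedge^[n] x) :=
    ⟨0, by rintro _ ⟨n, rfl⟩; exact (hmem n).1⟩
  have hlim : Tendsto (fun n ↦ concentrationHedge^[n] x) atTop (𝓝 L) :=
    tendsto_atTop_ciInf (antitone_iterate_concentrationHedge hx) hbdd
  have hL : L ∈ Ico 0 1 := ⟨le_ciInf fun n ↦ (hmem n).1, (ciInf_le hbdd 0).trans_lt hx.2⟩
  have hfix : IsFixedPt concentrationHedge L :=
    isFixedPt_of_tendsto_iterate hlim continuous_concentrationHedge.continuousAt
  rwa [← eq_zero_of_isFixedPt_concentrationHedge hL hfix]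

theorem concentration_orbit_tendsto_zero (m₀ : ℝ) (hm : m₀ ∈ Set.Ioo (0:ℝ) 1)
    (b : ℕ → ℝ) (h0 : b 0 = m₀)
    (hrec : ∀ n, b (n + 1) = b n + (1 - b n) * Real.log (1 - b n)) :
    Filter.Tendsto b Filter.atTop (nhds 0) := by
  have horbit : b = fun n ↦ concentrationHedge^[n] m₀ := by
    funext n
    induction n with
    | zero => exact h0
    | succ n ih => rw [hrec n, ih, iterate_succ_apply']; rfl
  rw [horbit]
  exact tendsto_iterate_concentrationHedge (Ioo_subset_Ico_self hm)
end

section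
/- Let ε₁ be a random variable on [0,∞) with continuous density δ, survival function Δ(d) = ∫_d^∞ δ, and let ε₂ have, conditionally on ε₁, density δ(ε₂)/Δ(ε₁) on [ε₁,∞). Then for any d ≥ 0 with Δ(d) > 0, P(ε₂ ≥ d) = Δ(d) - Δ(d)·ln(Δ(d)). -/
open MeasureTheory Set

/-
The survival function Δ is differentiable with Δ' = -δ, so δ/Δ is the derivative of -ln Δ.
For ε₁ ≤ d the inner integral is Δ(d), and integrating δ/Δ over [0, d] gives Δ(d) · (-ln Δ(d)).
For ε₁ > d the inner integral is Δ(ε₁), which cancels the denominator, and what remains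
integrates to Δ(d). The cancellation is harmless where Δ vanishes: Δ ≥ 0 attains its minimum
there, so its derivative -δ vanishes too.
-/

theorem Continuous.integrableOn_Ioi_of_integrableOn_Ioi {f : ℝ → ℝ} (hf : Continuous f)
    {a : ℝ} (ha : IntegrableOn f (Ioi a)) (b : ℝ) : IntegrableOn f (Ioi b) :=
  (hf.integrableOn_Icc.union ha).mono_set
    (Ioi_subset_Ioc_union_Ioi.trans (union_subset_union_left _ Ioc_subset_Icc_self))

theorem hasDerivAt_integral_Ioi {f : ℝ → ℝ} (hf : Continuous f) {a : ℝ}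
    (ha : IntegrableOn f (Ioi a)) (x : ℝ) :
    HasDerivAt (fun y => ∫ t in Ioi y, f t) (-f x) x := by
  have htail : (fun y => ∫ t in Ioi y, f t) = fun y => (∫ t in Ioi a, f t) - ∫ t in a..y, f t :=
    funext fun y => by
      rw [← intervalIntegral.integral_Ioi_sub_Ioi' ha
        (hf.integrableOn_Ioi_of_integrableOn_Ioi ha y)]
      ring
  rw [htail]
  exact (intervalIntegral.integral_hasDerivAt_right (hf.intervalIntegrable a x)
    (hf.stronglyMeasurableAtFilter _ _) hf.continuousAt).const_sub _

theorem integral_div_eq_log_sub_log {f F : ℝ → ℝ} {a b : ℝ} (hab : a ≤ b) (hf : Continuous f)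
    (hF : ∀ x, HasDerivAt F (-f x) x) (hpos : ∀ x ∈ Icc a b, 0 < F x) :
    ∫ x in a..b, f x / F x = Real.log (F a) - Real.log (F b) := by
  have hF_cont : Continuous F := continuous_iff_continuousAt.mpr fun x => (hF x).continuousAt
  have hderiv : ∀ x ∈ uIcc a b, HasDerivAt (fun y => -Real.log (F y)) (f x / F x) x :=
    fun x hx => by
      have h : HasDerivAt (fun y => -Real.log (F y)) (-(-f x / F x)) x :=
        ((hF x).log (hpos x (uIcc_of_le hab ▸ hx)).ne').neg
      rwa [neg_div, neg_neg] at h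
  have hcont : ContinuousOn (fun x => f x / F x) (uIcc a b) :=
    hf.continuousOn.div hF_cont.continuousOn fun x hx => (hpos x (uIcc_of_le hab ▸ hx)).ne'
  rw [intervalIntegral.integral_eq_sub_of_hasDerivAt hderiv hcont.intervalIntegrable]
  ring

theorem quite_hedge_integral_general (δ Δ : ℝ → ℝ)
    (hδc : Continuous δ) (hδnn : ∀ x, 0 ≤ δ x)
    (hnorm : ∫ x in Set.Ioi (0:ℝ), δ x = 1)
    (hΔ : ∀ d, Δ d = ∫ x in Set.Ioi d, δ x)
    (d : ℝ) (hd : 0 ≤ d) (hΔd : 0 < Δ d) :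
    ∫ ε₁ in Set.Ioi (0:ℝ),
        (δ ε₁ / Δ ε₁) * ∫ ε₂ in Set.Ioi (max ε₁ d), δ ε₂
      = Δ d - Δ d * Real.log (Δ d) := by
  have hint : IntegrableOn δ (Ioi 0) := Integrable.of_integral_ne_zero (by simp [hnorm])
  have hderiv x : HasDerivAt Δ (-δ x) x := funext hΔ ▸ hasDerivAt_integral_Ioi hδc hint x
  have hΔnn x : 0 ≤ Δ x := hΔ x ▸ setIntegral_nonneg measurableSet_Ioi fun y _ => hδnn y
  have hpos : ∀ x ∈ Icc 0 d, 0 < Δ x := fun x hx =>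
    hΔd.trans_le (antitone_of_hasDerivAt_nonpos hderiv (fun y => neg_nonpos.mpr (hδnn y)) hx.2)
  have hcancel x : δ x / Δ x * Δ x = δ x := div_mul_cancel_of_imp fun h =>
    neg_eq_zero.mp <| IsLocalMin.hasDerivAt_eq_zero (.of_forall fun y => h ▸ hΔnn y) (hderiv x)
  have hnear : EqOn (fun x => δ x / Δ x * ∫ t in Ioi (max x d), δ t)
      (fun x => Δ d * (δ x / Δ x)) (uIcc 0 d) := fun x hx => by
    rw [uIcc_of_le hd] at hx
    simp only [max_eq_right hx.2, ← hΔ, mul_comm]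
  have hfar : EqOn (fun x => δ x / Δ x * ∫ t in Ioi (max x d), δ t) δ (Ioi d) := fun x hx => by
    simp only [max_eq_left (mem_Ioi.mp hx).le, ← hΔ, hcancel]
  have hΔc : Continuous Δ := Differentiable.continuous fun x => (hderiv x).differentiableAt
  have hnear_cont : ContinuousOn (fun x => Δ d * (δ x / Δ x)) (uIcc 0 d) :=
    continuousOn_const.mul <| hδc.continuousOn.div hΔc.continuousOn fun x hx =>
      (hpos x (uIcc_of_le hd ▸ hx)).ne'
  have hnear_int := (intervalIntegrable_congr (hnear.mono uIoc_subset_uIcc)).mpr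
    (hnear_cont.intervalIntegrable (μ := volume))
  have hfar_int := (hδc.integrableOn_Ioi_of_integrableOn_Ioi hint d).congr_fun hfar.symm
    measurableSet_Ioi
  rw [← intervalIntegral.integral_interval_add_Ioi' hnear_int hfar_int,
    intervalIntegral.integral_congr hnear, setIntegral_congr_fun measurableSet_Ioi hfar,
    intervalIntegral.integral_const_mul, integral_div_eq_log_sub_log hd hδc hderiv hpos, ← hΔ,
    hΔ 0, hnorm, Real.log_one]
  ring

theorem quite_hedge_integral (δ Δ : ℝ → ℝ)
    (hδc : Continuous δ) (hδnn : ∀ x, 0 ≤ δ x) (hδ0 : ∀ x < 0, δ x = 0)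
    (hnorm : ∫ x in Set.Ioi (0:ℝ), δ x = 1)
    (hΔ : ∀ d, Δ d = ∫ x in Set.Ioi d, δ x)
    (d : ℝ) (hd : 0 ≤ d) (hΔd : 0 < Δ d) :
    ∫ ε₁ in Set.Ioi (0:ℝ),
        (δ ε₁ / Δ ε₁) * ∫ ε₂ in Set.Ioi (max ε₁ d), δ ε₂
      = Δ d - Δ d * Real.log (Δ d) :=
  quite_hedge_integral_general δ Δ hδc hδnn hnorm hΔ d hd hΔd
end
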